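/- For every n ≥ 3, the 3-token graph Γ₃(P_n) of the path graph on n vertices is isomorphic to the cubical staircase graph CS_n. -/

import Mathlib

open SimpleGraph Finset

/-- The `k`-token graph of a graph `G`: vertices are `k`-element subsets of the vertex set,
two subsets adjacent iff their symmetric difference is `{x, y}` with `xy` an edge of `G`. -/
def tokenGraph {V : Type*} [DecidableEq V] (G : SimpleGraph V) (k : ℕ) :
    SimpleGraph {s : Finset V // s.card = k} where
  Adj A B := ∃ x y, G.Adj x y ∧ symmDiff A.1 B.1 = {x, y}
  symm := by
    refine ⟨?_⟩
    rintro A B ⟨x, y, hxy, h⟩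
    exact ⟨x, y, hxy, by rwa [symmDiff_comm]⟩
  loopless := by
    refine ⟨?_⟩
    rintro A ⟨x, y, hxy, h⟩
    rw [symmDiff_self] at h
    exact (Finset.insert_nonempty x {y}).ne_empty (by simpa using h.symm)

/-- Vertex set of the cubical staircase graph `CS n` (1-indexed coordinates). -/
abbrev CSVert (n : ℕ) :=
  {v : ℕ × ℕ × ℕ // 1 ≤ v.1 ∧ v.1 ≤ n - 2 ∧ 1 ≤ v.2.1 ∧ v.2.1 ≤ v.1 ∧
    1 ≤ v.2.2 ∧ v.2.2 ≤ n - 1 - v.1}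

/-- The cubical staircase graph `CS n`: two vertices are adjacent iff they differ in exactly
one coordinate, by exactly 1. -/
def CS (n : ℕ) : SimpleGraph (CSVert n) where
  Adj a b :=
    (a.1.1 = b.1.1 ∧ a.1.2.1 = b.1.2.1 ∧ (a.1.2.2 + 1 = b.1.2.2 ∨ b.1.2.2 + 1 = a.1.2.2)) ∨
    (a.1.1 = b.1.1 ∧ a.1.2.2 = b.1.2.2 ∧ (a.1.2.1 + 1 = b.1.2.1 ∨ b.1.2.1 + 1 = a.1.2.1)) ∨
    (a.1.2.1 = b.1.2.1 ∧ a.1.2.2 = b.1.2.2 ∧ (a.1.1 + 1 = b.1.1 ∨ b.1.1 + 1 = a.1.1))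
  symm := ⟨fun a b h => by omega⟩
  loopless := ⟨fun a h => by omega⟩

/-- Disjoint union of an arbitrary family of graphs. -/
def sigmaGraph {ι : Type*} {V : ι → Type*} (G : ∀ i, SimpleGraph (V i)) :
    SimpleGraph (Σ i, V i) where
  Adj a b := ∃ (i : ι) (x y : V i), (G i).Adj x y ∧ a = ⟨i, x⟩ ∧ b = ⟨i, y⟩
  symm := ⟨by rintro a b ⟨i, x, y, h, rfl, rfl⟩; exact ⟨i, y, x, h.symm, rfl, rfl⟩⟩
  loopless := by
    refine ⟨?_⟩
    rintro a ⟨i, x, y, h, rfl, he⟩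
    exact h.ne (by simpa using he)

/-!
A 3-subset of `Fin n` is the same thing as a sorted triple `a < b < c`, and the vertex
`(i, j, k)` of `CS n` is the triple `(j - 1, i, n - k)` of (0-indexed) token positions.
An edge of the token graph moves one token to a neighbouring free position; as it cannot jump
over another token, the sorted triple changes in exactly one coordinate, by one. Hence both graphs
are the subgraph of the cube `P_n □ P_n □ P_n` induced on sorted triples.
-/

theorem Finset.exists_lt_lt_eq_of_card_eq_three {α : Type*} [LinearOrder α] {s : Finset α}
    (hs : #s = 3) : ∃ a b c, a < b ∧ b < c ∧ s = {a, b, c} := by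
  refine ⟨s.orderEmbOfFin hs 0, s.orderEmbOfFin hs 1, s.orderEmbOfFin hs 2, by simp, by simp, ?_⟩
  ext z
  rw [← mem_coe, ← s.range_orderEmbOfFin hs]
  simp only [Set.mem_range, Fin.exists_fin_succ, mem_insert, mem_singleton]
  simp [eq_comm]

theorem Finset.card_triple_of_lt {α : Type*} [LinearOrder α] {a₁ a₂ a₃ : α} (h₁ : a₁ < a₂)
    (h₂ : a₂ < a₃) : #({a₁, a₂, a₃} : Finset α) = 3 :=
  card_eq_three.mpr ⟨_, _, _, h₁.ne, (h₁.trans h₂).ne, h₂.ne, rfl⟩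

theorem Finset.insert_insert_singleton_eq_iff_of_lt {α : Type*} [LinearOrder α]
    {a₁ a₂ a₃ b₁ b₂ b₃ : α} (ha₁ : a₁ < a₂) (ha₂ : a₂ < a₃) (hb₁ : b₁ < b₂) (hb₂ : b₂ < b₃) :
    ({a₁, a₂, a₃} : Finset α) = {b₁, b₂, b₃} ↔ a₁ = b₁ ∧ a₂ = b₂ ∧ a₃ = b₃ := by
  refine ⟨fun h => ?_, by rintro ⟨rfl, rfl, rfl⟩; rfl⟩
  have hs := card_triple_of_lt hb₁ hb₂
  have sorted_eq {c₁ c₂ c₃ : α} (h₁ : c₁ < c₂) (h₂ : c₂ < c₃)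
      (hc : {c₁, c₂, c₃} = ({b₁, b₂, b₃} : Finset α)) : ![c₁, c₂, c₃] = ⇑(orderEmbOfFin _ hs) :=
    orderEmbOfFin_unique hs (by simp [Fin.forall_fin_succ, ← hc])
      (Fin.strictMono_iff_lt_succ.mpr (by simp [Fin.forall_fin_two, h₁, h₂]))
  have := (sorted_eq ha₁ ha₂ h).trans (sorted_eq hb₁ hb₂ rfl).symm
  exact ⟨congrFun this 0, congrFun this 1, congrFun this 2⟩

theorem Finset.eq_insert_erase_of_symmDiff_eq_pair {α : Type*} [DecidableEq α]
    {A B : Finset α} {x y : α} (hAB : #A = #B) (h : symmDiff A B = {x, y}) (hx : x ∈ A) :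
    y ∉ A ∧ B = insert y (A.erase x) := by
  have mem_pair (z : α) : z ∈ A ∧ z ∉ B ∨ z ∈ B ∧ z ∉ A ↔ z = x ∨ z = y := by
    rw [← mem_symmDiff, h, mem_insert, mem_singleton]
  have hxB : x ∉ B := by have := (mem_pair x).mpr (Or.inl rfl); tauto
  obtain ⟨p, hp⟩ : (B \ A).Nonempty := by
    rw [← card_pos, ← card_sdiff_comm hAB, card_pos]
    exact ⟨x, mem_sdiff.mpr ⟨hx, hxB⟩⟩
  rw [mem_sdiff] at hp
  obtain rfl : p = y := by
    rcases (mem_pair p).mp (Or.inr hp) with rfl | rfl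
    · exact absurd hp.1 hxB
    · rfl
  refine ⟨hp.2, ?_⟩
  ext z
  have := mem_pair z
  rw [mem_insert, mem_erase]
  grind

section SortedTriple

variable {n : ℕ} {a₁ a₂ a₃ b₁ b₂ b₃ x y : Fin n}

theorem boxProd_pathGraph_adj_of_eq_insert_erase (ha₁ : a₁ < a₂) (ha₂ : a₂ < a₃)
    (hb₁ : b₁ < b₂) (hb₂ : b₂ < b₃) (hxy : (pathGraph n).Adj x y)
    (hx : x ∈ ({a₁, a₂, a₃} : Finset (Fin n))) (hy : y ∉ ({a₁, a₂, a₃} : Finset (Fin n)))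
    (h : {b₁, b₂, b₃} = insert y (({a₁, a₂, a₃} : Finset (Fin n)).erase x)) :
    (pathGraph n □ (pathGraph n □ pathGraph n)).Adj (a₁, a₂, a₃) (b₁, b₂, b₃) := by
  simp only [mem_insert, mem_singleton, not_or] at hx hy
  rw [pathGraph_adj] at hxy
  simp only [boxProd_adj, pathGraph_adj, Prod.mk.injEq]
  rcases hx with rfl | rfl | rfl
  · have : ({b₁, b₂, b₃} : Finset (Fin n)) = {y, a₂, a₃} := by
      rw [h]; ext z; simp only [mem_insert, mem_erase, mem_singleton]; omega
    obtain ⟨rfl, rfl, rfl⟩ :=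
      (insert_insert_singleton_eq_iff_of_lt hb₁ hb₂ (by omega) ha₂).mp this
    omega
  · have : ({b₁, b₂, b₃} : Finset (Fin n)) = {a₁, y, a₃} := by
      rw [h]; ext z; simp only [mem_insert, mem_erase, mem_singleton]; omega
    obtain ⟨rfl, rfl, rfl⟩ :=
      (insert_insert_singleton_eq_iff_of_lt hb₁ hb₂ (by omega) (by omega)).mp this
    omega
  · have : ({b₁, b₂, b₃} : Finset (Fin n)) = {a₁, a₂, y} := by
      rw [h]; ext z; simp only [mem_insert, mem_erase, mem_singleton]; omega
    obtain ⟨rfl, rfl, rfl⟩ :=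
      (insert_insert_singleton_eq_iff_of_lt hb₁ hb₂ ha₁ (by omega)).mp this
    omega

theorem exists_symmDiff_eq_pair_iff_boxProd_pathGraph_adj (ha₁ : a₁ < a₂) (ha₂ : a₂ < a₃)
    (hb₁ : b₁ < b₂) (hb₂ : b₂ < b₃) :
    (∃ x y, (pathGraph n).Adj x y ∧
      symmDiff ({a₁, a₂, a₃} : Finset (Fin n)) {b₁, b₂, b₃} = {x, y}) ↔
    (pathGraph n □ (pathGraph n □ pathGraph n)).Adj (a₁, a₂, a₃) (b₁, b₂, b₃) := by
  constructor
  · rintro ⟨x, y, hxy, h⟩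
    have hcard := (card_triple_of_lt ha₁ ha₂).trans (card_triple_of_lt hb₁ hb₂).symm
    by_cases hx : x ∈ ({a₁, a₂, a₃} : Finset (Fin n))
    · obtain ⟨hy, hb⟩ := eq_insert_erase_of_symmDiff_eq_pair hcard h hx
      exact boxProd_pathGraph_adj_of_eq_insert_erase ha₁ ha₂ hb₁ hb₂ hxy hx hy hb
    · have hx' : x ∈ ({b₁, b₂, b₃} : Finset (Fin n)) := by
        have : x ∈ symmDiff ({a₁, a₂, a₃} : Finset (Fin n)) {b₁, b₂, b₃} := by simp [h]
        rw [mem_symmDiff] at this; tauto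
      rw [symmDiff_comm] at h
      obtain ⟨hy, ha⟩ := eq_insert_erase_of_symmDiff_eq_pair hcard.symm h hx'
      exact (boxProd_pathGraph_adj_of_eq_insert_erase hb₁ hb₂ ha₁ ha₂ hxy hx' hy ha).symm
  · simp only [boxProd_adj, Prod.mk.injEq]
    rintro (⟨hxy, rfl, rfl⟩ | ⟨⟨hxy, rfl⟩ | ⟨hxy, rfl⟩, rfl⟩) <;> refine ⟨_, _, hxy, ?_⟩ <;>
      rw [pathGraph_adj] at hxy <;> ext z <;>
      simp only [mem_symmDiff, mem_insert, mem_singleton] <;> omega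

end SortedTriple

namespace CSVert

variable {n : ℕ}

def lo (v : CSVert n) : Fin n := ⟨v.1.2.1 - 1, by have := v.2; omega⟩

def mid (v : CSVert n) : Fin n := ⟨v.1.1, by have := v.2; omega⟩

def hi (v : CSVert n) : Fin n := ⟨n - v.1.2.2, by have := v.2; omega⟩

theorem lo_lt_mid (v : CSVert n) : v.lo < v.mid := by
  have := v.2; rw [Fin.lt_def]; simp only [lo, mid]; omega

theorem mid_lt_hi (v : CSVert n) : v.mid < v.hi := by
  have := v.2; rw [Fin.lt_def]; simp only [mid, hi]; omega

theorem cs_adj_iff {v w : CSVert n} :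
    (CS n).Adj v w ↔
      (pathGraph n □ (pathGraph n □ pathGraph n)).Adj (v.lo, v.mid, v.hi) (w.lo, w.mid, w.hi) := by
  have := v.2; have := w.2
  simp only [CS, boxProd_adj, pathGraph_adj, Prod.mk.injEq, Fin.ext_iff, lo, mid, hi]
  omega

def tokens (v : CSVert n) : Finset (Fin n) := {v.lo, v.mid, v.hi}

theorem card_tokens (v : CSVert n) : #v.tokens = 3 :=
  card_triple_of_lt v.lo_lt_mid v.mid_lt_hi

theorem tokens_injective : Function.Injective (tokens (n := n)) := by
  intro v w h
  obtain ⟨h₁, h₂, h₃⟩ := (insert_insert_singleton_eq_iff_of_lt v.lo_lt_mid v.mid_lt_hi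
    w.lo_lt_mid w.mid_lt_hi).mp h
  have := v.2; have := w.2
  simp only [lo, mid, hi, Fin.ext_iff] at h₁ h₂ h₃
  ext <;> omega

theorem exists_tokens_eq {s : Finset (Fin n)} (hs : #s = 3) : ∃ v : CSVert n, v.tokens = s := by
  obtain ⟨a, b, c, hab, hbc, rfl⟩ := exists_lt_lt_eq_of_card_eq_three hs
  let v : CSVert n := ⟨(b.val, a.val + 1, n - c.val), by simp only; omega⟩
  have hlo : v.lo = a := by ext; simp only [v, lo]; omega
  have hhi : v.hi = c := by ext; simp only [v, hi]; omega
  exact ⟨v, by rw [tokens, hlo, hhi]; rfl⟩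

noncomputable def tokensEquiv : CSVert n ≃ {s : Finset (Fin n) // #s = 3} :=
  Equiv.ofBijective (fun v => ⟨v.tokens, v.card_tokens⟩)
    ⟨fun _ _ h => tokens_injective (congrArg Subtype.val h),
      fun s => (exists_tokens_eq s.2).imp fun _ hv => Subtype.ext hv⟩

theorem tokenGraph_adj_tokensEquiv {v w : CSVert n} :
    (tokenGraph (pathGraph n) 3).Adj (tokensEquiv v) (tokensEquiv w) ↔ (CS n).Adj v w :=
  (exists_symmDiff_eq_pair_iff_boxProd_pathGraph_adj v.lo_lt_mid v.mid_lt_hi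
    w.lo_lt_mid w.mid_lt_hi).trans cs_adj_iff.symm

end CSVert

theorem stmt9_general {n : ℕ} :
    Nonempty (tokenGraph (pathGraph n) 3 ≃g CS n) :=
  ⟨(⟨CSVert.tokensEquiv, CSVert.tokenGraph_adj_tokensEquiv⟩ : CS n ≃g _).symm⟩

theorem stmt9 {n : ℕ} (hn : 3 ≤ n) :
    Nonempty (tokenGraph (pathGraph n) 3 ≃g CS n) :=
  stmt9_general
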